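/- Let S and 𝒜 be nonempty finite types, p ≥ 1, and L_π, L_μ ≥ 0. Let π : ℝᵖ → S → 𝒜 → ℝ satisfy |π_θ(a|s) − π_{θ'}(a|s)| ≤ L_π‖θ − θ'‖ for all s, a, θ, θ'. Let P : S → 𝒜 → S → ℝ satisfy P(s|s',a) ≥ 0 and Σ_{s∈S} P(s|s',a) = 1 for all s', a. Let μ : ℝᵖ → S → ℝ satisfy (Σ_s (μ_θ(s) − μ_{θ'}(s))²)^{1/2} ≤ L_μ‖θ − θ'‖ for all θ, θ'. For each θ define the S×S matrix P(θ) with entries P(θ)_{s,s'} = Σ_{a∈𝒜} π_θ(a|s') P(s|s',a), and set A(θ) := I − P(θ) + e μ_θᵀ, where e is the all-ones vector indexed by S. Then for all θ, θ' ∈ ℝᵖ, ‖A(θ) − A(θ')‖_F ≤ √|S| (|𝒜| L_π + L_μ) ‖θ − θ'‖. -/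

import Mathlib

/-- The Frobenius norm of a real matrix. -/
noncomputable def frob {m n : Type*} [Fintype m] [Fintype n] (M : Matrix m n ℝ) : ℝ :=
  Real.sqrt (∑ i, ∑ j, (M i j) ^ 2)

/-- View a square matrix as a Euclidean vector indexed by pairs. -/
noncomputable def frobToE {m n : Type*} [Fintype m] [Fintype n] (M : Matrix m n ℝ) :
    EuclideanSpace ℝ (m × n) := WithLp.toLp 2 (fun q : m × n => M q.1 q.2)

lemma frob_eq_norm {m n : Type*} [Fintype m] [Fintype n] (M : Matrix m n ℝ) :
    frob M = ‖frobToE M‖ := by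
  rw [EuclideanSpace.norm_eq]
  simp [frob, frobToE, Fintype.sum_prod_type, sq_abs]

lemma frob_add_le {m n : Type*} [Fintype m] [Fintype n] (M N : Matrix m n ℝ) :
    frob (M + N) ≤ frob M + frob N := by
  rw [frob_eq_norm, frob_eq_norm, frob_eq_norm]
  have h : frobToE (M + N) = frobToE M + frobToE N := by
    ext q; simp [frobToE]
  rw [h]
  exact norm_add_le _ _

/-- Lipschitz bound for `A(θ) = I − P(θ) + e μ_θᵀ`: if the policy `π` is entrywise
`L_π`-Lipschitz and the stationary distribution `μ` is `L_μ`-Lipschitz in Euclidean norm,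
then `‖A(θ) − A(θ')‖_F ≤ √|S| (|𝒜| L_π + L_μ) ‖θ − θ'‖`, where
`P(θ)_{s,s'} = Σ_a π_θ(a|s') P(s|s',a)` and `(e μ_θᵀ)_{s,s'} = μ_θ(s')`. -/
theorem stmt15 {S 𝒜 : Type*} [Fintype S] [Fintype 𝒜] [Nonempty S] [Nonempty 𝒜]
    [DecidableEq S]
    (p : ℕ) (hp : 1 ≤ p) (Lπ Lμ : ℝ) (hLπ : 0 ≤ Lπ) (hLμ : 0 ≤ Lμ)
    (π : EuclideanSpace ℝ (Fin p) → S → 𝒜 → ℝ)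
    (hπLip : ∀ (θ θ' : EuclideanSpace ℝ (Fin p)) (s : S) (a : 𝒜),
      |π θ s a - π θ' s a| ≤ Lπ * ‖θ - θ'‖)
    (P : S → S → 𝒜 → ℝ)
    (hP0 : ∀ s s' a, 0 ≤ P s s' a) (hP1 : ∀ s' a, ∑ s, P s s' a = 1)
    (μ : EuclideanSpace ℝ (Fin p) → S → ℝ)
    (hμLip : ∀ θ θ' : EuclideanSpace ℝ (Fin p),
      Real.sqrt (∑ s, (μ θ s - μ θ' s) ^ 2) ≤ Lμ * ‖θ - θ'‖) :
    ∀ θ θ' : EuclideanSpace ℝ (Fin p),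
      frob (((1 : Matrix S S ℝ) - Matrix.of (fun s s' => ∑ a, π θ s' a * P s s' a)
              + Matrix.vecMulVec (fun _ => (1 : ℝ)) (μ θ)) -
            ((1 : Matrix S S ℝ) - Matrix.of (fun s s' => ∑ a, π θ' s' a * P s s' a)
              + Matrix.vecMulVec (fun _ => (1 : ℝ)) (μ θ')))
        ≤ Real.sqrt (Fintype.card S) * ((Fintype.card 𝒜 : ℝ) * Lπ + Lμ) * ‖θ - θ'‖ := by
  intro θ θ'
  set d := ‖θ - θ'‖ with hd
  have hd0 : 0 ≤ d := norm_nonneg _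
  set M1 : Matrix S S ℝ :=
    Matrix.of (fun s s' => ∑ a, (π θ' s' a - π θ s' a) * P s s' a) with hM1
  set M2 : Matrix S S ℝ := Matrix.of (fun s s' => μ θ s' - μ θ' s') with hM2
  have hsplit :
      ((1 : Matrix S S ℝ) - Matrix.of (fun s s' => ∑ a, π θ s' a * P s s' a)
          + Matrix.vecMulVec (fun _ => (1 : ℝ)) (μ θ)) -
        ((1 : Matrix S S ℝ) - Matrix.of (fun s s' => ∑ a, π θ' s' a * P s s' a)
          + Matrix.vecMulVec (fun _ => (1 : ℝ)) (μ θ')) = M1 + M2 := by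
    ext s s'
    simp [hM1, hM2, Matrix.vecMulVec, Matrix.sub_apply, Matrix.add_apply, sub_mul,
      Finset.sum_sub_distrib]
    ring
  rw [hsplit]
  -- basic bounds on P
  have hPle1 : ∀ s s' a, P s s' a ≤ 1 := by
    intro s s' a
    calc P s s' a ≤ ∑ t, P t s' a :=
          Finset.single_le_sum (fun t _ => hP0 t s' a) (Finset.mem_univ s)
      _ = 1 := hP1 s' a
  set c : S → S → ℝ := fun s s' => ∑ a, P s s' a with hc
  have hc0 : ∀ s s', 0 ≤ c s s' := fun s s' =>
    Finset.sum_nonneg fun a _ => hP0 s s' a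
  have hcA : ∀ s s', c s s' ≤ (Fintype.card 𝒜 : ℝ) := by
    intro s s'
    calc c s s' ≤ ∑ _a : 𝒜, (1 : ℝ) :=
          Finset.sum_le_sum fun a _ => hPle1 s s' a
      _ = (Fintype.card 𝒜 : ℝ) := by simp
  have hcsum : ∀ s', ∑ s, c s s' = (Fintype.card 𝒜 : ℝ) := by
    intro s'
    rw [hc]
    rw [Finset.sum_comm]
    simp [hP1]
  -- bound on M1 entries
  have hM1abs : ∀ s s', |M1 s s'| ≤ Lπ * d * c s s' := by
    intro s s'
    calc |M1 s s'| ≤ ∑ a, |(π θ' s' a - π θ s' a) * P s s' a| :=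
          Finset.abs_sum_le_sum_abs _ _
      _ ≤ ∑ a, (Lπ * d) * P s s' a := by
          refine Finset.sum_le_sum fun a _ => ?_
          rw [abs_mul, abs_of_nonneg (hP0 s s' a)]
          have := hπLip θ' θ s' a
          have hdd : ‖θ' - θ‖ = d := by rw [hd, norm_sub_rev]
          rw [hdd] at this
          exact mul_le_mul_of_nonneg_right this (hP0 s s' a)
      _ = Lπ * d * c s s' := by rw [← Finset.mul_sum]
  -- sum of squares of M1
  have hM1sq : ∑ s, ∑ s', (M1 s s') ^ 2 ≤
      (Fintype.card S : ℝ) * ((Fintype.card 𝒜 : ℝ) * Lπ * d) ^ 2 := by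
    have h1 : ∑ s, ∑ s', (M1 s s') ^ 2 ≤ (Lπ * d) ^ 2 * ∑ s, ∑ s', (c s s') ^ 2 := by
      rw [Finset.mul_sum]
      refine Finset.sum_le_sum fun s _ => ?_
      rw [Finset.mul_sum]
      refine Finset.sum_le_sum fun s' _ => ?_
      have : (M1 s s') ^ 2 ≤ (Lπ * d * c s s') ^ 2 := by
        rw [← sq_abs (M1 s s')]
        exact pow_le_pow_left₀ (abs_nonneg _) (hM1abs s s') 2
      calc (M1 s s') ^ 2 ≤ (Lπ * d * c s s') ^ 2 := this
        _ = (Lπ * d) ^ 2 * (c s s') ^ 2 := by ring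
    have h2 : ∑ s, ∑ s', (c s s') ^ 2 ≤
        (Fintype.card S : ℝ) * (Fintype.card 𝒜 : ℝ) ^ 2 := by
      rw [Finset.sum_comm]
      calc ∑ s', ∑ s, (c s s') ^ 2
          ≤ ∑ s' : S, ∑ s, (Fintype.card 𝒜 : ℝ) * c s s' := by
            refine Finset.sum_le_sum fun s' _ => Finset.sum_le_sum fun s _ => ?_
            rw [sq]
            exact mul_le_mul_of_nonneg_right (hcA s s') (hc0 s s')
        _ = ∑ s' : S, (Fintype.card 𝒜 : ℝ) ^ 2 := by
            refine Finset.sum_congr rfl fun s' _ => ?_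
            rw [← Finset.mul_sum, hcsum s', sq]
        _ = (Fintype.card S : ℝ) * (Fintype.card 𝒜 : ℝ) ^ 2 := by simp [mul_comm]
    calc ∑ s, ∑ s', (M1 s s') ^ 2
        ≤ (Lπ * d) ^ 2 * ((Fintype.card S : ℝ) * (Fintype.card 𝒜 : ℝ) ^ 2) := by
          refine le_trans h1 ?_
          exact mul_le_mul_of_nonneg_left h2 (by positivity)
      _ = (Fintype.card S : ℝ) * ((Fintype.card 𝒜 : ℝ) * Lπ * d) ^ 2 := by ring
  have hfrob1 : frob M1 ≤ Real.sqrt (Fintype.card S) * ((Fintype.card 𝒜 : ℝ) * Lπ * d) := by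
    have hX : 0 ≤ (Fintype.card 𝒜 : ℝ) * Lπ * d := by positivity
    calc frob M1 ≤ Real.sqrt ((Fintype.card S : ℝ) *
            ((Fintype.card 𝒜 : ℝ) * Lπ * d) ^ 2) := Real.sqrt_le_sqrt hM1sq
      _ = Real.sqrt (Fintype.card S) * ((Fintype.card 𝒜 : ℝ) * Lπ * d) := by
          rw [Real.sqrt_mul (by positivity), Real.sqrt_sq hX]
  have hfrob2 : frob M2 ≤ Real.sqrt (Fintype.card S) * (Lμ * d) := by
    have : ∑ s : S, ∑ s', (M2 s s') ^ 2 =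
        (Fintype.card S : ℝ) * ∑ s', (μ θ s' - μ θ' s') ^ 2 := by
      simp [hM2, Finset.sum_const, nsmul_eq_mul]
    rw [frob, this, Real.sqrt_mul (by positivity)]
    exact mul_le_mul_of_nonneg_left (hμLip θ θ') (Real.sqrt_nonneg _)
  calc frob (M1 + M2) ≤ frob M1 + frob M2 := frob_add_le _ _
    _ ≤ Real.sqrt (Fintype.card S) * ((Fintype.card 𝒜 : ℝ) * Lπ * d)
        + Real.sqrt (Fintype.card S) * (Lμ * d) := add_le_add hfrob1 hfrob2
    _ = Real.sqrt (Fintype.card S) * ((Fintype.card 𝒜 : ℝ) * Lπ + Lμ) * d := by ring
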